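/- The number of Hall basis words of wordlength ℓ on n generators equals the necklace number (1/ℓ) Σ_{d | ℓ} μ(d) n^{ℓ/d}, i.e., the rank of the degree-ℓ component of the free Lie ring on n generators. -/

import Mathlib

/-- A word over a totally ordered alphabet is a *Lyndon word* if it is nonempty and
lexicographically strictly smaller than each of its proper nontrivial rotations.
Hall basis words of wordlength `ℓ` on `n` generators are in bijection with Lyndon words
of length `ℓ` over an `n`-letter alphabet. -/
def IsLyndon {α : Type*} [LinearOrder α] (w : List α) : Prop :=
  w ≠ [] ∧ ∀ u v : List α, u ≠ [] → v ≠ [] → w = u ++ v → List.Lex (· < ·) w (v ++ u)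

open List

namespace LyndonCount

variable {α : Type*}

/-- `wpow k t` is the word `t` repeated `k` times. -/
def wpow : ℕ → List α → List α
  | 0, _ => []
  | k+1, t => t ++ wpow k t

@[simp] lemma wpow_zero (t : List α) : wpow 0 t = [] := rfl

lemma wpow_succ (k : ℕ) (t : List α) : wpow (k+1) t = t ++ wpow k t := rfl

@[simp] lemma length_wpow (k : ℕ) (t : List α) : (wpow k t).length = t.length * k := by
  induction k with
  | zero => simp [wpow]
  | succ k ih => simp [wpow, ih]; ring

lemma wpow_succ' (k : ℕ) (t : List α) : wpow (k+1) t = wpow k t ++ t := by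
  induction k with
  | zero => simp [wpow]
  | succ k ih =>
    calc wpow (k+1+1) t = t ++ wpow (k+1) t := rfl
      _ = t ++ (wpow k t ++ t) := by rw [ih]
      _ = (t ++ wpow k t) ++ t := by rw [List.append_assoc]

lemma eq_wpow_of_comm : ∀ (k : ℕ) (t y : List α), y.length = t.length * k →
    t ++ y = y ++ t → y = wpow k t := by
  intro k
  induction k with
  | zero => intro t y hy _; simpa using List.length_eq_zero_iff.mp (by simpa using hy)
  | succ k ih =>
    intro t y hy hc
    have hle : t.length ≤ y.length := by
      rw [hy]; exact Nat.le_mul_of_pos_right _ k.succ_pos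
    have ht : t = y.take t.length := by
      conv_lhs => rw [← List.take_left (l₁ := t) (l₂ := y)]
      rw [hc, List.take_append_of_le_length hle]
    have hsplit : y = t ++ y.drop t.length := by
      conv_lhs => rw [← List.take_append_drop t.length y, ← ht]
    have hc' : t ++ y.drop t.length = y.drop t.length ++ t := by
      apply List.append_cancel_left (as := t)
      calc t ++ (t ++ y.drop t.length) = t ++ y := by rw [← hsplit]
        _ = y ++ t := hc
        _ = (t ++ y.drop t.length) ++ t := by rw [← hsplit]
        _ = t ++ (y.drop t.length ++ t) := by rw [List.append_assoc]
    have hlen' : (y.drop t.length).length = t.length * k := by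
      rw [List.length_drop, hy, Nat.mul_succ]; omega
    rw [hsplit, ih t _ hlen' hc', wpow_succ]

/-- If a word of positive length is fixed by rotation by `p ∣ length`, it is a power
of its length-`p` prefix. -/
lemma eq_wpow_of_rotate {x : List α} {p : ℕ} (hp : 0 < p) (hx : x ≠ [])
    (hpm : p ∣ x.length) (h : x.rotate p = x) :
    x = wpow (x.length / p) (x.take p) := by
  have hm : 0 < x.length := List.length_pos_iff.mpr hx
  have hple : p ≤ x.length := Nat.le_of_dvd hm hpm
  have hk : 0 < x.length / p := Nat.div_pos hple hp
  have hrot : x.drop p ++ x.take p = x := by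
    rw [← List.rotate_eq_drop_append_take hple, h]
  have hc : x.take p ++ x.drop p = x.drop p ++ x.take p := by
    rw [List.take_append_drop, hrot]
  have hlt : (x.take p).length = p := by simp [hple]
  have hld : (x.drop p).length = (x.take p).length * (x.length / p - 1) := by
    rw [List.length_drop, hlt]
    rcases hpm with ⟨c, hc2⟩
    rw [hc2, Nat.mul_div_cancel_left _ hp]
    cases c with
    | zero => simp
    | succ c => simp only [Nat.add_sub_cancel, Nat.mul_succ]
  have := eq_wpow_of_comm _ _ _ hld hc
  calc x = x.take p ++ x.drop p := (List.take_append_drop _ _).symm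
    _ = x.take p ++ wpow (x.length / p - 1) (x.take p) := by rw [this]
    _ = wpow (x.length / p) (x.take p) := by
        rw [← wpow_succ]; congr 1; omega

lemma rotate_wpow (k : ℕ) (t : List α) : (wpow k t).rotate t.length = wpow k t := by
  cases k with
  | zero => simp [wpow]
  | succ k =>
    have hle : t.length ≤ (wpow (k+1) t).length := by
      simp [Nat.le_mul_of_pos_right _ k.succ_pos]
    conv_lhs => rw [List.rotate_eq_drop_append_take hle, wpow_succ, List.drop_left, List.take_left]
    rw [← wpow_succ']

lemma rotate_wpow_mul (k j : ℕ) (t : List α) :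
    (wpow k t).rotate (t.length * j) = wpow k t := by
  induction j with
  | zero => simp
  | succ j ih => rw [Nat.mul_succ, ← List.rotate_rotate, ih, rotate_wpow]

lemma rotate_wpow_mod (k q : ℕ) (t : List α) (ht : t ≠ []) :
    (wpow k t).rotate q = (wpow k t).rotate (q % t.length) := by
  conv_lhs => rw [← Nat.div_add_mod q t.length]
  rw [← List.rotate_rotate, rotate_wpow_mul]

lemma wpow_append_rot (k : ℕ) (u v : List α) :
    wpow (k+1) (v ++ u) = v ++ wpow k (u ++ v) ++ u := by
  induction k with
  | zero => simp [wpow]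
  | succ k ih =>
    rw [wpow_succ, ih, wpow_succ]
    simp [List.append_assoc]

lemma rotate_wpow_eq_wpow_rotate (k : ℕ) (t : List α) {s : ℕ} (hs : s ≤ t.length) :
    (wpow k t).rotate s = wpow k (t.rotate s) := by
  cases k with
  | zero => simp [wpow]
  | succ k =>
    have hle : s ≤ (wpow (k+1) t).length := by
      simp; calc s ≤ t.length := hs
        _ ≤ t.length * (k+1) := Nat.le_mul_of_pos_right _ k.succ_pos
    rw [List.rotate_eq_drop_append_take hle, List.rotate_eq_drop_append_take hs]
    rw [wpow_succ, List.drop_append_of_le_length hs, List.take_append_of_le_length hs]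
    have := wpow_append_rot k (t.take s) (t.drop s)
    rw [List.take_append_drop] at this
    rw [this, List.append_assoc]

lemma take_wpow (j : ℕ) {k : ℕ} (t : List α) (hjk : j ≤ k) :
    (wpow k t).take (t.length * j) = wpow j t := by
  induction j generalizing k with
  | zero => simp
  | succ j ih =>
    cases k with
    | zero => omega
    | succ k =>
      rw [wpow_succ, List.take_append]
      have h1 : t.length * (j+1) - t.length = t.length * j := by rw [Nat.mul_succ]; omega
      have h2 : t.length ≤ t.length * (j+1) := Nat.le_mul_of_pos_right _ j.succ_pos
      rw [List.take_of_length_le (by simpa using h2), h1, ih (by omega), wpow_succ]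


section Order
variable [LinearOrder α]

lemma lex_iff_lt {l l' : List α} : List.Lex (· < ·) l l' ↔ l < l' := Iff.rfl

lemma lex_append : ∀ {a b : List α}, a.length = b.length → List.Lex (· < ·) a b →
    ∀ (c e : List α), List.Lex (· < ·) (a ++ c) (b ++ e)
  | _, _, h, List.Lex.nil, c, e => by simp at h
  | _, _, _h, List.Lex.rel hr, c, e => List.Lex.rel hr
  | _, _, h, List.Lex.cons hab, c, e => List.Lex.cons (lex_append (by simpa using h) hab c e)

lemma lt_append {a b : List α} (h : a.length = b.length) (hab : a < b) (c e : List α) :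
    a ++ c < b ++ e :=
  lex_append h hab c e

lemma lt_wpow {a b : List α} (h : a.length = b.length) (hab : a < b) {k : ℕ} (hk : 0 < k) :
    wpow k a < wpow k b := by
  cases k with
  | zero => omega
  | succ k => exact lt_append h hab _ _

lemma IsLyndon.lt_rotate {w : List α} (hw : IsLyndon w) {t : ℕ} (ht : 0 < t)
    (htw : t < w.length) : w < w.rotate t := by
  have h1 : w.take t ≠ [] := by
    apply List.ne_nil_of_length_pos; simpa using by omega
  have h2 : w.drop t ≠ [] := by
    apply List.ne_nil_of_length_pos; simp; omega
  have := hw.2 (w.take t) (w.drop t) h1 h2 (List.take_append_drop t w).symm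
  rwa [List.rotate_eq_drop_append_take htw.le]

lemma isLyndon_of_lt_rotate {w : List α} (hw : w ≠ [])
    (h : ∀ t, 0 < t → t < w.length → w < w.rotate t) : IsLyndon w := by
  refine ⟨hw, fun u v hu hv huv => ?_⟩
  have ht1 : 0 < u.length := List.length_pos_iff.mpr hu
  have ht2 : u.length < w.length := by
    rw [huv, List.length_append]
    have := List.length_pos_iff.mpr hv; omega
  have := h u.length ht1 ht2
  rw [List.rotate_eq_drop_append_take ht2.le, huv, List.take_left, List.drop_left] at this
  rw [huv]
  exact this

end Order

lemma exists_min_rot (x : List α) (hx : x ≠ []) :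
    ∃ p, (0 < p ∧ x.rotate p = x) ∧ ∀ q, 0 < q → x.rotate q = x → p ≤ q := by
  classical
  have hex : ∃ p, 0 < p ∧ x.rotate p = x :=
    ⟨x.length, List.length_pos_iff.mpr hx, x.rotate_length⟩
  exact ⟨Nat.find hex, Nat.find_spec hex, fun q h1 h2 => Nat.find_min' hex ⟨h1, h2⟩⟩

lemma rotate_mul_fix {x : List α} {p : ℕ} (hfix : x.rotate p = x) (j : ℕ) :
    x.rotate (p * j) = x := by
  induction j with
  | zero => simp
  | succ j ih => rw [Nat.mul_succ, ← List.rotate_rotate, ih, hfix]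

lemma per_dvd {x : List α} {p : ℕ} (hp : 0 < p) (hfix : x.rotate p = x)
    (hmin : ∀ q, 0 < q → x.rotate q = x → p ≤ q) {q : ℕ} (hq : x.rotate q = x) : p ∣ q := by
  have hmod : x.rotate (q % p) = x := by
    conv_rhs => rw [← hq]
    conv_rhs => rw [← Nat.div_add_mod q p]
    rw [← List.rotate_rotate, rotate_mul_fix hfix]
  rcases Nat.eq_zero_or_pos (q % p) with h | h
  · exact Nat.dvd_of_mod_eq_zero h
  · have := hmin _ h hmod
    have := Nat.mod_lt q hp
    omega

lemma rotate_ne_of_min {x : List α} {p : ℕ}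
    (hmin : ∀ q, 0 < q → x.rotate q = x → p ≤ q) {t₁ t₂ : ℕ}
    (h12 : t₁ < t₂) (hd : t₂ - t₁ < p) : x.rotate t₁ ≠ x.rotate t₂ := by
  intro heq
  have h1 : x.rotate t₂ = (x.rotate (t₂ - t₁)).rotate t₁ := by
    rw [List.rotate_rotate, Nat.sub_add_cancel h12.le]
  have h2 : x = x.rotate (t₂ - t₁) :=
    List.rotate_injective t₁ (by rw [← heq] at h1; exact h1)
  have := hmin _ (by omega) h2.symm
  omega

lemma rotate_inj_of_min {x : List α} {p : ℕ}
    (hmin : ∀ q, 0 < q → x.rotate q = x → p ≤ q) {t₁ t₂ : ℕ}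
    (h1 : t₁ < p) (h2 : t₂ < p) (heq : x.rotate t₁ = x.rotate t₂) : t₁ = t₂ := by
  rcases lt_trichotomy t₁ t₂ with h | h | h
  · exact absurd heq (rotate_ne_of_min hmin h (by omega))
  · exact h
  · exact absurd heq.symm (rotate_ne_of_min hmin h (by omega))

section Lyndon
variable [LinearOrder α]

lemma take_wpow_one {a : List α} {k : ℕ} (hk : 0 < k) : (wpow k a).take a.length = a := by
  cases k with
  | zero => omega
  | succ k => rw [wpow_succ, List.take_left]

lemma rotate_fix_rotate {y : List α} (r q : ℕ) :
    ((y.rotate r).rotate q = y.rotate r) ↔ (y.rotate q = y) := by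
  constructor
  · intro h
    apply List.rotate_injective r
    calc (y.rotate q).rotate r = (y.rotate r).rotate q := by
          rw [List.rotate_rotate, List.rotate_rotate, Nat.add_comm]
      _ = y.rotate r := h
  · intro h
    rw [List.rotate_rotate, Nat.add_comm, ← List.rotate_rotate, h]

lemma lyndon_lt_rotate {w : List α} (hw : IsLyndon w) {t : ℕ} (ht : 0 < t)
    (htw : t < w.length) : w < w.rotate t := by
  have h1 : w.take t ≠ [] := by
    apply List.ne_nil_of_length_pos; simp; omega
  have h2 : w.drop t ≠ [] := by
    apply List.ne_nil_of_length_pos; simp; omega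
  have := hw.2 (w.take t) (w.drop t) h1 h2 (List.take_append_drop t w).symm
  rwa [List.rotate_eq_drop_append_take htw.le]

lemma wpow_le_rotate {w : List α} (hw : IsLyndon w) {k : ℕ} (hk : 0 < k) (t : ℕ) :
    wpow k w ≤ (wpow k w).rotate t := by
  have hd : 0 < w.length := List.length_pos_iff.mpr hw.1
  rw [rotate_wpow_mod k t w hw.1]
  have hsd : t % w.length < w.length := Nat.mod_lt _ hd
  rw [rotate_wpow_eq_wpow_rotate k w hsd.le]
  rcases Nat.eq_zero_or_pos (t % w.length) with h0 | h0
  · rw [h0]; simp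
  · exact le_of_lt (lt_wpow (by simp) (lyndon_lt_rotate hw h0 hsd) hk)

lemma wpow_min_rot {w : List α} (hw : IsLyndon w) {k : ℕ} (hk : 0 < k)
    {q : ℕ} (hq : 0 < q) (hfix : (wpow k w).rotate q = wpow k w) : w.length ≤ q := by
  by_contra hcon
  push_neg at hcon
  rw [rotate_wpow_eq_wpow_rotate k w hcon.le] at hfix
  have e1 : (wpow k (w.rotate q)).take w.length = w.rotate q := by
    conv_lhs => rw [← List.length_rotate w q]
    exact take_wpow_one hk
  have e2 : (wpow k w).take w.length = w := take_wpow_one hk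
  have hrq : w.rotate q = w := by rw [← e1, hfix, e2]
  have hlt := lyndon_lt_rotate hw hq hcon
  rw [hrq] at hlt
  exact lt_irrefl _ hlt

end Lyndon

lemma finite_lyndon (n d : ℕ) : Finite {w : List (Fin n) // w.length = d ∧ IsLyndon w} := by
  haveI : Finite {l : List (Fin n) // l.length = d} :=
    Finite.of_equiv _ (Equiv.vectorEquivFin (Fin n) d).symm
  have hinj : Function.Injective (fun w : {w : List (Fin n) // w.length = d ∧ IsLyndon w} =>
      (⟨w.1, w.2.1⟩ : {l : List (Fin n) // l.length = d})) := by
    intro a b h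
    simp only [Subtype.mk.injEq] at h
    exact Subtype.ext h
  exact Finite.of_injective _ hinj

lemma key (n m : ℕ) (hm : 0 < m) :
    n ^ m = ∑ d ∈ m.divisors, Nat.card {w : List (Fin n) // w.length = d ∧ IsLyndon w} * d := by
  classical
  let F : (Σ d : m.divisors, {w : List (Fin n) // w.length = (d : ℕ) ∧ IsLyndon w} × Fin (d : ℕ)) →
      {x : List (Fin n) // x.length = m} :=
    fun z => ⟨(wpow (m / (z.1 : ℕ)) z.2.1.1).rotate (z.2.2 : ℕ), by
      have hd : (z.1 : ℕ) ∣ m := (Nat.mem_divisors.mp z.1.2).1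
      simp [z.2.1.2.1, Nat.mul_div_cancel' hd]⟩
  have hFbij : Function.Bijective F := by
    constructor
    · rintro ⟨d, ⟨⟨w, hwl, hwL⟩, r⟩⟩ ⟨d', ⟨⟨w', hwl', hwL'⟩, r'⟩⟩ hFeq
      have hdvd : (d : ℕ) ∣ m := (Nat.mem_divisors.mp d.2).1
      have hdvd' : (d' : ℕ) ∣ m := (Nat.mem_divisors.mp d'.2).1
      have hdpos : 0 < (d : ℕ) := Nat.pos_of_mem_divisors d.2
      have hdpos' : 0 < (d' : ℕ) := Nat.pos_of_mem_divisors d'.2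
      have hk : 0 < m / (d : ℕ) := Nat.div_pos (Nat.le_of_dvd hm hdvd) hdpos
      have hk' : 0 < m / (d' : ℕ) := Nat.div_pos (Nat.le_of_dvd hm hdvd') hdpos'
      have hr : (r : ℕ) < (d : ℕ) := r.isLt
      have hr' : (r' : ℕ) < (d' : ℕ) := r'.isLt
      set y := wpow (m / (d : ℕ)) w with hy
      set y' := wpow (m / (d' : ℕ)) w' with hy'
      have hyl : y.length = m := by
        rw [hy, length_wpow, hwl, Nat.mul_div_cancel' hdvd]
      have hyl' : y'.length = m := by
        rw [hy', length_wpow, hwl', Nat.mul_div_cancel' hdvd']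
      have hxeq : y.rotate (r : ℕ) = y'.rotate (r' : ℕ) := congrArg Subtype.val hFeq
      have hymin : ∀ q, 0 < q → y.rotate q = y → (d : ℕ) ≤ q := by
        intro q hq hfix
        have := wpow_min_rot hwL hk hq (by rwa [← hy])
        omega
      have hymin' : ∀ q, 0 < q → y'.rotate q = y' → (d' : ℕ) ≤ q := by
        intro q hq hfix
        have := wpow_min_rot hwL' hk' hq (by rwa [← hy'])
        omega
      have hyfix : y.rotate (d : ℕ) = y := by
        have h0 := rotate_wpow (m / (d : ℕ)) w
        rwa [hwl] at h0
      have hyfix' : y'.rotate (d' : ℕ) = y' := by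
        have h0 := rotate_wpow (m / (d' : ℕ)) w'
        rwa [hwl'] at h0
      have hdd' : (d : ℕ) = (d' : ℕ) := by
        have h1 : (d : ℕ) ≤ (d' : ℕ) :=
          hymin _ hdpos' ((rotate_fix_rotate (r : ℕ) _).mp
            (by rw [hxeq]; exact (rotate_fix_rotate (r' : ℕ) _).mpr hyfix'))
        have h2 : (d' : ℕ) ≤ (d : ℕ) :=
          hymin' _ hdpos ((rotate_fix_rotate (r' : ℕ) _).mp
            (by rw [← hxeq]; exact (rotate_fix_rotate (r : ℕ) _).mpr hyfix))
        omega
      have hdsub : d = d' := Subtype.ext hdd'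
      subst hdsub
      have hdmle : (d : ℕ) ≤ m := Nat.le_of_dvd hm hdvd
      have hyy' : y' = y.rotate ((r : ℕ) + (m - (r' : ℕ))) := by
        have h1 : (y'.rotate (r' : ℕ)).rotate (m - (r' : ℕ)) = y' := by
          rw [List.rotate_rotate, Nat.add_sub_cancel' (by omega : (r' : ℕ) ≤ m), ← hyl']
          exact y'.rotate_length
        rw [← h1, ← hxeq, List.rotate_rotate]
      have hle1 : y ≤ y' := by
        rw [hyy']
        exact wpow_le_rotate hwL hk _
      have hle2 : y' ≤ y := by
        have hyy : y = y'.rotate ((r' : ℕ) + (m - (r : ℕ))) := by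
          have h1 : (y.rotate (r : ℕ)).rotate (m - (r : ℕ)) = y := by
            rw [List.rotate_rotate, Nat.add_sub_cancel' (by omega : (r : ℕ) ≤ m), ← hyl]
            exact y.rotate_length
          rw [← h1, hxeq, List.rotate_rotate]
        rw [hyy]
        exact wpow_le_rotate hwL' hk' _
      have hyeq : y = y' := le_antisymm hle1 hle2
      have hww' : w = w' := by
        have e1 : y.take w.length = w := by
          rw [hy]; exact take_wpow_one hk
        have e2 : y'.take w'.length = w' := by
          rw [hy']; exact take_wpow_one hk'
        calc w = y.take w.length := e1.symm
          _ = y'.take (d : ℕ) := by rw [hyeq, hwl]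
          _ = y'.take w'.length := by rw [hwl']
          _ = w' := e2
      subst hww'
      have hrr' : (r : ℕ) = (r' : ℕ) := by
        apply rotate_inj_of_min hymin hr hr'
        rw [hxeq, hyeq]
      have : r = r' := Fin.ext hrr'
      subst this
      rfl
    · rintro ⟨x, hx⟩
      have hx0 : x ≠ [] := by
        apply List.ne_nil_of_length_pos; omega
      obtain ⟨p, ⟨hp, hfix⟩, hmin⟩ := exists_min_rot x hx0
      have hpm : p ∣ m := by
        have hq : x.rotate m = x := by rw [← hx]; exact x.rotate_length
        exact per_dvd hp hfix hmin hq
      have hple : p ≤ m := Nat.le_of_dvd hm hpm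
      have hk : 0 < m / p := Nat.div_pos hple hp
      set u := x.take p with hu
      have hxu : x = wpow (m / p) u := by
        have h0 := eq_wpow_of_rotate hp hx0 (by rw [hx]; exact hpm) hfix
        rwa [hx] at h0
      have hul : u.length = p := by
        rw [hu, List.length_take, hx]; omega
      obtain ⟨s, hs, hsmin⟩ := Finset.exists_min_image (Finset.range p)
        (fun i => u.rotate i) ⟨0, by simpa using hp⟩
      rw [Finset.mem_range] at hs
      set w := u.rotate s with hw
      have hwl : w.length = p := by rw [hw, List.length_rotate, hul]
      have huw : u = w.rotate (p - s) := by
        rw [hw, List.rotate_rotate, Nat.add_sub_cancel' hs.le, ← hul]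
        exact (u.rotate_length).symm
      have hxw : x = (wpow (m / p) w).rotate (p - s) := by
        rw [hxu, huw, rotate_wpow_eq_wpow_rotate _ _ (by omega : p - s ≤ w.length)]
      have hwL : IsLyndon w := by
        apply isLyndon_of_lt_rotate (by rw [← List.length_pos_iff, hwl]; exact hp)
        intro t ht htw
        rw [hwl] at htw
        have hwt : w.rotate t = u.rotate ((s + t) % p) := by
          rw [hw, List.rotate_rotate, ← hul, List.rotate_mod]
        have hle : w ≤ w.rotate t := by
          rw [hwt]
          exact hsmin _ (Finset.mem_range.mpr (Nat.mod_lt _ hp))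
        rcases lt_or_eq_of_le hle with h | h
        · exact h
        · exfalso
          have hfixw : (wpow (m / p) w).rotate t = wpow (m / p) w := by
            rw [rotate_wpow_eq_wpow_rotate _ _ (by omega : t ≤ w.length), ← h]
          have hxt : x.rotate t = x := by
            rw [hxw]
            exact (rotate_fix_rotate _ _).mpr hfixw
          have := hmin t ht hxt
          omega
      refine ⟨⟨⟨p, Nat.mem_divisors.mpr ⟨hpm, hm.ne'⟩⟩,
        ⟨⟨w, hwl, hwL⟩, ⟨(p - s) % p, Nat.mod_lt _ hp⟩⟩⟩, ?_⟩
      apply Subtype.ext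
      show (wpow (m / p) w).rotate ((p - s) % p) = x
      rw [← hwl, ← rotate_wpow_mod _ _ _ hwL.1, hwl, ← hxw]
  haveI : ∀ d : ℕ, Finite {w : List (Fin n) // w.length = d ∧ IsLyndon w} :=
    fun d => finite_lyndon n d
  haveI Ift : ∀ d : ℕ, Fintype {w : List (Fin n) // w.length = d ∧ IsLyndon w} :=
    fun d => Fintype.ofFinite _
  have h1 : Nat.card {x : List (Fin n) // x.length = m} = n ^ m := by
    have h2 : Nat.card (List.Vector (Fin n) m) = n ^ m := by
      rw [Nat.card_eq_fintype_card, card_vector, Fintype.card_fin]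
    exact h2
  have h3 := Nat.card_eq_of_bijective F hFbij
  rw [h1] at h3
  rw [← h3, Nat.card_eq_fintype_card, Fintype.card_sigma]
  rw [← Finset.sum_coe_sort m.divisors
    (fun d => Nat.card {w : List (Fin n) // w.length = d ∧ IsLyndon w} * d)]
  congr 1
  funext d
  rw [Fintype.card_prod, Fintype.card_fin, Nat.card_eq_fintype_card]

end LyndonCount

/-- **Counting Hall (Lyndon) words.** The number of Hall basis words of wordlength `ℓ ≥ 1`
on `n` generators — equivalently, the number of Lyndon words of length `ℓ` over an
`n`-letter alphabet, i.e. the rank of the degree-`ℓ` component of the free Lie ring on `n`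
generators — equals the necklace number `(1/ℓ) ∑_{d ∣ ℓ} μ(d) n^{ℓ/d}`. -/
theorem card_lyndon_eq_necklace (n ℓ : ℕ) (hℓ : 1 ≤ ℓ) :
    (ℓ * Nat.card {w : List (Fin n) // w.length = ℓ ∧ IsLyndon w} : ℤ) =
      ∑ d ∈ ℓ.divisors, ArithmeticFunction.moebius d * (n : ℤ) ^ (ℓ / d) := by
  have hkey : ∀ m > 0, ∑ d ∈ m.divisors,
      (fun d : ℕ => (d : ℤ) * Nat.card {w : List (Fin n) // w.length = d ∧ IsLyndon w}) d
      = (fun m : ℕ => (n : ℤ) ^ m) m := by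
    intro m hm
    have h := LyndonCount.key n m hm
    simp only []
    have h2 : ((n : ℤ) ^ m) = ((n ^ m : ℕ) : ℤ) := by push_cast; ring
    rw [h2, h, Nat.cast_sum]
    exact Finset.sum_congr rfl fun d _ => by push_cast; ring
  have hinv := (ArithmeticFunction.sum_eq_iff_sum_smul_moebius_eq (R := ℤ)).mp hkey ℓ (by omega)
  rw [← hinv]
  rw [Nat.sum_divisorsAntidiagonal
    (fun a b => (ArithmeticFunction.moebius a : ℤ) • (n : ℤ) ^ b)]
  exact Finset.sum_congr rfl fun d _ => by rw [zsmul_eq_mul]; push_cast; ring
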